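/- Let E ⊆ ℝ^N be a measurable set such that P^γ_{s₀}(E) < ∞ for some s₀ ∈ (0,1), where P^γ_s(E) denotes the fractional Gaussian s-perimeter in Ω = ℝ^N. Then lim_{s→0⁺} s·P^γ_s(E) = 2γ(E)γ(Eᶜ). -/

import Mathlib

open MeasureTheory Real Set Filter

noncomputable def gaussDensity (N : ℕ) (x : EuclideanSpace ℝ (Fin N)) : ℝ :=
  (2 * π) ^ (-(N : ℝ) / 2) * Real.exp (-‖x‖ ^ 2 / 2)

noncomputable def gaussMeasure (N : ℕ) : Measure (EuclideanSpace ℝ (Fin N)) :=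
  volume.withDensity fun x => ENNReal.ofReal (gaussDensity N x)

noncomputable def mehler (N : ℕ) (t : ℝ) (x y : EuclideanSpace ℝ (Fin N)) : ℝ :=
  (1 - Real.exp (-2 * t)) ^ (-(N : ℝ) / 2) *
    Real.exp (-(Real.exp (-2 * t) * ‖x‖ ^ 2 - 2 * Real.exp (-t) * (inner ℝ x y : ℝ) +
      Real.exp (-2 * t) * ‖y‖ ^ 2) / (2 * (1 - Real.exp (-2 * t))))

noncomputable def Kker (N : ℕ) (σ : ℝ) (x y : EuclideanSpace ℝ (Fin N)) : ENNReal :=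
  ∫⁻ t in Ioi (0 : ℝ), ENNReal.ofReal (mehler N t x y * t ^ (-σ / 2 - 1))

noncomputable def Lgamma (N : ℕ) (s : ℝ) (A B : Set (EuclideanSpace ℝ (Fin N))) : ENNReal :=
  ∫⁻ x in A, ∫⁻ y in B, Kker N s x y ∂(gaussMeasure N) ∂(gaussMeasure N)

noncomputable def Pgamma (N : ℕ) (s : ℝ) (E Ω : Set (EuclideanSpace ℝ (Fin N))) : ENNReal :=
  Lgamma N s (E ∩ Ω) (Eᶜ ∩ Ω) + Lgamma N s (E ∩ Ω) (Eᶜ ∩ Ωᶜ) + Lgamma N s (E ∩ Ωᶜ) (Eᶜ ∩ Ω)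

/-!
Since `∫_T^∞ t^{-s/2-1} dt = (2/s) T^{-s/2}` and `M_t(x,y) → 1` as `t → ∞`, the part of `K_s(x,y)`
beyond a fixed `T` behaves like `2/s`, while the part on `(0,T]` is at most `T^{s₀/2} K_{s₀}(x,y)`.
Hence `s K_s(x,y) → 2` wherever `K_{s₀}(x,y) < ∞`, i.e. for `γ ⊗ γ`-a.e. `(x,y) ∈ E × Eᶜ`.
Splitting at `T = 1` gives, for `s ≤ s₀`, the domination
`s K_s ≤ s₀ K_{s₀} + C e^{|x|²/4} e^{|y|²/4}` by a `γ ⊗ γ`-integrable function, and dominated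
convergence yields `s P_s(E) → 2 γ(E) γ(Eᶜ)`.
-/

open scoped ENNReal Topology

noncomputable def powWeightIntegral (f : ℝ → ℝ) (s : ℝ) : ℝ≥0∞ :=
  ∫⁻ t in Ioi 0, ENNReal.ofReal (f t * t ^ (-s / 2 - 1))

section powWeightIntegral

variable {f : ℝ → ℝ} {s s₀ T b : ℝ}

lemma lintegral_Ioi_rpow_neg_half_sub_one (hs : 0 < s) (hT : 0 < T) :
    ∫⁻ t in Ioi T, ENNReal.ofReal (t ^ (-s / 2 - 1)) = ENNReal.ofReal (2 / s * T ^ (-s / 2)) := by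
  have hlt : -s / 2 - 1 < -1 := by linarith
  rw [← ofReal_integral_eq_lintegral_ofReal (integrableOn_Ioi_rpow_of_lt hlt hT)
    ((ae_restrict_iff' measurableSet_Ioi).2 (ae_of_all _ fun t ht =>
      Real.rpow_nonneg (hT.trans ht).le _)), integral_Ioi_rpow_of_lt hlt hT]
  congr 1
  rw [show -s / 2 - 1 + 1 = -s / 2 by ring]
  field_simp

lemma powWeightIntegral_eq_add (hT : 0 < T) :
    powWeightIntegral f s = (∫⁻ t in Ioc 0 T, ENNReal.ofReal (f t * t ^ (-s / 2 - 1)))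
      + ∫⁻ t in Ioi T, ENNReal.ofReal (f t * t ^ (-s / 2 - 1)) := by
  rw [powWeightIntegral, ← lintegral_union measurableSet_Ioi (Ioc_disjoint_Ioi le_rfl),
    Ioc_union_Ioi_eq_Ioi hT.le]

lemma rpow_neg_half_sub_one_le (hT : 1 ≤ T) (hs : 0 ≤ s) (hss₀ : s ≤ s₀) {t : ℝ}
    (ht : t ∈ Ioc 0 T) : t ^ (-s / 2 - 1) ≤ T ^ (s₀ / 2) * t ^ (-s₀ / 2 - 1) := by
  have hsplit : t ^ (-s / 2 - 1) = t ^ ((s₀ - s) / 2) * t ^ (-s₀ / 2 - 1) := by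
    rw [← Real.rpow_add ht.1]; ring_nf
  have hpow : t ^ ((s₀ - s) / 2) ≤ T ^ (s₀ / 2) :=
    calc t ^ ((s₀ - s) / 2) ≤ T ^ ((s₀ - s) / 2) :=
          Real.rpow_le_rpow ht.1.le ht.2 (by linarith)
      _ ≤ T ^ (s₀ / 2) := Real.rpow_le_rpow_of_exponent_le hT (by linarith)
  rw [hsplit]
  exact mul_le_mul_of_nonneg_right hpow (Real.rpow_nonneg ht.1.le _)

lemma setLIntegral_Ioc_le_powWeightIntegral (hf0 : ∀ t, 0 < t → 0 ≤ f t) (hT : 1 ≤ T)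
    (hs : 0 ≤ s) (hss₀ : s ≤ s₀) :
    ∫⁻ t in Ioc 0 T, ENNReal.ofReal (f t * t ^ (-s / 2 - 1))
      ≤ ENNReal.ofReal (T ^ (s₀ / 2)) * powWeightIntegral f s₀ := by
  calc ∫⁻ t in Ioc 0 T, ENNReal.ofReal (f t * t ^ (-s / 2 - 1))
      ≤ ∫⁻ t in Ioc 0 T, ENNReal.ofReal (T ^ (s₀ / 2)) * ENNReal.ofReal (f t * t ^ (-s₀ / 2 - 1)) := by
        refine setLIntegral_mono' measurableSet_Ioc fun t ht => ?_
        rw [← ENNReal.ofReal_mul (by positivity)]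
        refine ENNReal.ofReal_le_ofReal ?_
        calc f t * t ^ (-s / 2 - 1) ≤ f t * (T ^ (s₀ / 2) * t ^ (-s₀ / 2 - 1)) :=
              mul_le_mul_of_nonneg_left (rpow_neg_half_sub_one_le hT hs hss₀ ht) (hf0 t ht.1)
          _ = _ := by ring
    _ ≤ ENNReal.ofReal (T ^ (s₀ / 2)) * powWeightIntegral f s₀ := by
        rw [lintegral_const_mul' _ _ ENNReal.ofReal_ne_top]
        exact mul_le_mul_right (lintegral_mono_set Ioc_subset_Ioi_self) _

lemma mul_setLIntegral_Ioi_const_mul_rpow (hs : 0 < s) (hT : 0 < T) :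
    ENNReal.ofReal s * ∫⁻ t in Ioi T, ENNReal.ofReal b * ENNReal.ofReal (t ^ (-s / 2 - 1))
      = ENNReal.ofReal (2 * b * T ^ (-s / 2)) := by
  rw [lintegral_const_mul' _ _ ENNReal.ofReal_ne_top, lintegral_Ioi_rpow_neg_half_sub_one hs hT,
    ← mul_assoc, ← ENNReal.ofReal_mul hs.le, ← ENNReal.ofReal_mul' (by positivity)]
  congr 1
  field_simp

lemma mul_setLIntegral_Ioi_le (hs : 0 < s) (hT : 0 < T) (hb : ∀ t, T ≤ t → f t ≤ b) :
    ENNReal.ofReal s * ∫⁻ t in Ioi T, ENNReal.ofReal (f t * t ^ (-s / 2 - 1))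
      ≤ ENNReal.ofReal (2 * b * T ^ (-s / 2)) := by
  rw [← mul_setLIntegral_Ioi_const_mul_rpow hs hT]
  refine mul_le_mul_right (setLIntegral_mono' measurableSet_Ioi fun t ht => ?_) _
  have ht0 : 0 ≤ t ^ (-s / 2 - 1) := Real.rpow_nonneg (hT.trans ht).le _
  rw [← ENNReal.ofReal_mul' ht0]
  exact ENNReal.ofReal_le_ofReal (mul_le_mul_of_nonneg_right (hb t ht.le) ht0)

lemma le_mul_setLIntegral_Ioi (hs : 0 < s) (hT : 0 < T) (hb : ∀ t, T ≤ t → b ≤ f t) :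
    ENNReal.ofReal (2 * b * T ^ (-s / 2))
      ≤ ENNReal.ofReal s * ∫⁻ t in Ioi T, ENNReal.ofReal (f t * t ^ (-s / 2 - 1)) := by
  rw [← mul_setLIntegral_Ioi_const_mul_rpow hs hT]
  refine mul_le_mul_right (setLIntegral_mono' measurableSet_Ioi fun t ht => ?_) _
  have ht0 : 0 ≤ t ^ (-s / 2 - 1) := Real.rpow_nonneg (hT.trans ht).le _
  rw [← ENNReal.ofReal_mul' ht0]
  exact ENNReal.ofReal_le_ofReal (mul_le_mul_of_nonneg_right (hb t ht.le) ht0)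

lemma mul_powWeightIntegral_le (hf0 : ∀ t, 0 < t → 0 ≤ f t) (hT : 1 ≤ T) (hs : 0 < s)
    (hss₀ : s ≤ s₀) (hb : ∀ t, T ≤ t → f t ≤ b) :
    ENNReal.ofReal s * powWeightIntegral f s
      ≤ ENNReal.ofReal s * (ENNReal.ofReal (T ^ (s₀ / 2)) * powWeightIntegral f s₀)
        + ENNReal.ofReal (2 * b) := by
  have hT0 : 0 < T := by linarith
  have hb0 : 0 ≤ b := (hf0 T hT0).trans (hb T le_rfl)
  have hTs : T ^ (-s / 2) ≤ 1 := Real.rpow_le_one_of_one_le_of_nonpos hT (by linarith)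
  rw [powWeightIntegral_eq_add hT0, mul_add]
  gcongr
  · exact setLIntegral_Ioc_le_powWeightIntegral hf0 hT hs.le hss₀
  · refine (mul_setLIntegral_Ioi_le hs hT0 hb).trans (ENNReal.ofReal_le_ofReal ?_)
    nlinarith

lemma le_mul_powWeightIntegral (hT : 0 < T) (hs : 0 < s) (hb : ∀ t, T ≤ t → b ≤ f t) :
    ENNReal.ofReal (2 * b * T ^ (-s / 2)) ≤ ENNReal.ofReal s * powWeightIntegral f s := by
  rw [powWeightIntegral_eq_add hT, mul_add]
  exact (le_mul_setLIntegral_Ioi hs hT hb).trans le_add_self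

theorem tendsto_mul_powWeightIntegral (hs₀ : 0 < s₀) (hf0 : ∀ t, 0 < t → 0 ≤ f t)
    (hf : Tendsto f atTop (𝓝 1)) (hfin : powWeightIntegral f s₀ ≠ ∞) :
    Tendsto (fun s => ENNReal.ofReal s * powWeightIntegral f s) (𝓝[>] 0) (𝓝 2) := by
  rw [tendsto_order]
  refine ⟨fun a ha => ?_, fun a ha => ?_⟩
  · obtain ⟨r, -, har, hr2⟩ := ENNReal.lt_iff_exists_real_btwn.1 ha
    have hr : r / 2 < 1 := by
      have : r < 2 := by simpa using hr2
      linarith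
    obtain ⟨T, hT⟩ := (hf.eventually (eventually_gt_nhds hr)).exists_forall_of_atTop
    have hT1 : 0 < max T 1 := by positivity
    have hlim : Tendsto (fun s : ℝ => ENNReal.ofReal (2 * (r / 2) * max T 1 ^ (-s / 2)))
        (𝓝[>] 0) (𝓝 (ENNReal.ofReal r)) := by
      have hc : Continuous fun s : ℝ => 2 * (r / 2) * max T 1 ^ (-s / 2) := by
        fun_prop (disch := positivity)
      have := ((ENNReal.continuous_ofReal.comp hc).tendsto 0).mono_left
        (nhdsWithin_le_nhds (s := Ioi 0))
      simpa [mul_div_cancel₀, Function.comp_def] using this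
    filter_upwards [hlim.eventually (lt_mem_nhds har), self_mem_nhdsWithin] with s hs hs0
    exact hs.trans_le (le_mul_powWeightIntegral hT1 hs0
      fun t ht => (hT t ((le_max_left _ _).trans ht)).le)
  · obtain ⟨r, -, h2r, hra⟩ := ENNReal.lt_iff_exists_real_btwn.1 ha
    have hr : 1 < r / 2 := by
      have : 2 < r := by simpa using h2r
      linarith
    obtain ⟨T, hT⟩ := (hf.eventually (eventually_lt_nhds hr)).exists_forall_of_atTop
    set C := ENNReal.ofReal (max T 1 ^ (s₀ / 2)) * powWeightIntegral f s₀
    have hC : C ≠ ∞ := ENNReal.mul_ne_top ENNReal.ofReal_ne_top hfin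
    have hlim : Tendsto (fun s : ℝ => ENNReal.ofReal s * C + ENNReal.ofReal (2 * (r / 2)))
        (𝓝[>] 0) (𝓝 (ENNReal.ofReal r)) := by
      have hofReal : Tendsto ENNReal.ofReal (𝓝[>] 0) (𝓝 0) :=
        (ENNReal.continuous_ofReal.tendsto' 0 0 ENNReal.ofReal_zero).mono_left nhdsWithin_le_nhds
      have := (ENNReal.Tendsto.mul_const hofReal (Or.inr hC)).add_const (ENNReal.ofReal r)
      simpa [mul_div_cancel₀] using this
    filter_upwards [hlim.eventually (gt_mem_nhds hra), Ioc_mem_nhdsGT hs₀] with s hs hss₀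
    exact (mul_powWeightIntegral_le hf0 (le_max_right _ _) hss₀.1 hss₀.2
      fun t ht => (hT t ((le_max_left _ _).trans ht)).le).trans_lt hs

end powWeightIntegral

section Mehler

variable {N : ℕ} {t : ℝ} (x y : EuclideanSpace ℝ (Fin N))

lemma mehler_nonneg (ht : 0 < t) : 0 ≤ mehler N t x y := by
  have : Real.exp (-2 * t) < 1 := Real.exp_lt_one_iff.2 (by linarith)
  exact mul_nonneg (Real.rpow_nonneg (by linarith) _) (Real.exp_nonneg _)

lemma tendsto_mehler_atTop : Tendsto (fun t => mehler N t x y) atTop (𝓝 1) := by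
  have hg : ContinuousAt (fun u : ℝ => (1 - u ^ 2) ^ (-(N : ℝ) / 2) *
      Real.exp (-(u ^ 2 * ‖x‖ ^ 2 - 2 * u * (inner ℝ x y : ℝ) + u ^ 2 * ‖y‖ ^ 2) /
        (2 * (1 - u ^ 2)))) 0 := by
    fun_prop (disch := norm_num)
  have hexp : ∀ t : ℝ, Real.exp (-2 * t) = Real.exp (-t) ^ 2 := fun t => by
    rw [← Real.exp_nat_mul]; ring_nf
  convert hg.tendsto.comp tendsto_exp_neg_atTop_nhds_zero using 2 with t
  · simp only [Function.comp_apply, mehler, hexp]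
  · simp

-- With `u = e^{-t}` and `2⟪x, y⟫ ≤ ‖x‖² + ‖y‖²`, the exponent is at most
-- `u (‖x‖² + ‖y‖²) / (2 (1 + u))`.
lemma mehler_exponent_le (ht : 0 < t) :
    -(Real.exp (-2 * t) * ‖x‖ ^ 2 - 2 * Real.exp (-t) * (inner ℝ x y : ℝ) +
      Real.exp (-2 * t) * ‖y‖ ^ 2) / (2 * (1 - Real.exp (-2 * t)))
      ≤ 4⁻¹ * ‖x‖ ^ 2 + 4⁻¹ * ‖y‖ ^ 2 := by
  have hexp : Real.exp (-2 * t) = Real.exp (-t) ^ 2 := by rw [← Real.exp_nat_mul]; ring_nf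
  have hu0 : 0 < Real.exp (-t) := Real.exp_pos _
  have hu1 : Real.exp (-t) < 1 := Real.exp_lt_one_iff.2 (by linarith)
  have hinner : 2 * (inner ℝ x y : ℝ) ≤ ‖x‖ ^ 2 + ‖y‖ ^ 2 := by
    nlinarith [real_inner_le_norm x y, sq_nonneg (‖x‖ - ‖y‖)]
  rw [hexp, div_le_iff₀ (by nlinarith)]
  nlinarith [mul_le_mul_of_nonneg_left hinner hu0.le,
    mul_nonneg (add_nonneg (sq_nonneg ‖x‖) (sq_nonneg ‖y‖)) (sq_nonneg (1 - Real.exp (-t)))]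

lemma mehler_le_of_one_le (ht : 1 ≤ t) :
    mehler N t x y ≤ (1 - Real.exp (-2)) ^ (-(N : ℝ) / 2) *
      (Real.exp (4⁻¹ * ‖x‖ ^ 2) * Real.exp (4⁻¹ * ‖y‖ ^ 2)) := by
  have h2 : 0 < 1 - Real.exp (-2) := by
    have : Real.exp (-2) < 1 := Real.exp_lt_one_iff.2 (by norm_num)
    linarith
  have h2t : Real.exp (-2 * t) ≤ Real.exp (-2) := Real.exp_le_exp.2 (by linarith)
  rw [← Real.exp_add]
  refine mul_le_mul (Real.rpow_le_rpow_of_nonpos h2 (by linarith) ?_)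
    (Real.exp_le_exp.2 (mehler_exponent_le x y (by linarith))) (Real.exp_nonneg _)
    (Real.rpow_nonneg h2.le _)
  have : (0 : ℝ) ≤ N := Nat.cast_nonneg N
  linarith

end Mehler

lemma measurable_Kker (N : ℕ) (s : ℝ) :
    Measurable fun z : EuclideanSpace ℝ (Fin N) × EuclideanSpace ℝ (Fin N) => Kker N s z.1 z.2 := by
  have h : Measurable fun p : (EuclideanSpace ℝ (Fin N) × EuclideanSpace ℝ (Fin N)) × ℝ =>
      ENNReal.ofReal (mehler N p.2 p.1.1 p.1.2 * p.2 ^ (-s / 2 - 1)) := by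
    unfold mehler
    fun_prop
  exact h.lintegral_prod_right'

section Kker

variable {N : ℕ} {s s₀ : ℝ}

lemma tendsto_mul_Kker (hs₀ : 0 < s₀) {x y : EuclideanSpace ℝ (Fin N)}
    (hfin : Kker N s₀ x y ≠ ∞) :
    Tendsto (fun s => ENNReal.ofReal s * Kker N s x y) (𝓝[>] 0) (𝓝 2) :=
  tendsto_mul_powWeightIntegral hs₀ (fun _ ht => mehler_nonneg x y ht) (tendsto_mehler_atTop x y)
    hfin

lemma mul_Kker_le (hs : 0 < s) (hss₀ : s ≤ s₀) (x y : EuclideanSpace ℝ (Fin N)) :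
    ENNReal.ofReal s * Kker N s x y ≤ ENNReal.ofReal s₀ * Kker N s₀ x y +
      ENNReal.ofReal (2 * (1 - Real.exp (-2)) ^ (-(N : ℝ) / 2)) *
        (ENNReal.ofReal (Real.exp (4⁻¹ * ‖x‖ ^ 2)) * ENNReal.ofReal (Real.exp (4⁻¹ * ‖y‖ ^ 2))) := by
  have hc : 0 ≤ (1 - Real.exp (-2)) ^ (-(N : ℝ) / 2) :=
    Real.rpow_nonneg (sub_nonneg.2 (Real.exp_le_one_iff.2 (by norm_num))) _
  have h := mul_powWeightIntegral_le (fun _ ht => mehler_nonneg x y ht) le_rfl hs hss₀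
    fun t ht => mehler_le_of_one_le x y ht
  rw [Real.one_rpow, ENNReal.ofReal_one, one_mul] at h
  refine h.trans (add_le_add ?_ (le_of_eq ?_))
  · gcongr
    rfl
  rw [← ENNReal.ofReal_mul (by positivity), ← ENNReal.ofReal_mul (by positivity), mul_assoc]

end Kker

instance gaussMeasure.instSFinite (N : ℕ) : SFinite (gaussMeasure N) := by
  unfold gaussMeasure
  infer_instance

lemma lintegral_exp_mul_sq_norm_lt_top (N : ℕ) {a : ℝ} (ha : a < 1 / 2) :
    ∫⁻ x, ENNReal.ofReal (Real.exp (a * ‖x‖ ^ 2)) ∂gaussMeasure N < ∞ := by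
  have hint : Integrable fun x : EuclideanSpace ℝ (Fin N) => Real.exp (-(1 / 2 - a) * ‖x‖ ^ 2) := by
    refine Integrable.of_integral_ne_zero ?_
    rw [GaussianFourier.integral_rexp_neg_mul_sq_norm (by linarith)]
    positivity
  rw [gaussMeasure, lintegral_withDensity_eq_lintegral_mul _ (by unfold gaussDensity; fun_prop)
    (by fun_prop)]
  refine (lintegral_congr fun x => ?_).trans_lt
    (hint.const_mul ((2 * π) ^ (-(N : ℝ) / 2))).lintegral_lt_top
  rw [Pi.mul_apply, gaussDensity, ← ENNReal.ofReal_mul (by positivity), mul_assoc,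
    ← Real.exp_add]
  ring_nf

lemma lintegral_prod_exp_mul_sq_norm_ne_top (N : ℕ) {a : ℝ} (ha : a < 1 / 2)
    (A B : Set (EuclideanSpace ℝ (Fin N))) :
    ∫⁻ z, ENNReal.ofReal (Real.exp (a * ‖z.1‖ ^ 2)) * ENNReal.ofReal (Real.exp (a * ‖z.2‖ ^ 2))
      ∂((gaussMeasure N).restrict A).prod ((gaussMeasure N).restrict B) ≠ ∞ := by
  set w := fun x : EuclideanSpace ℝ (Fin N) => ENNReal.ofReal (Real.exp (a * ‖x‖ ^ 2))
  have h : ∀ C, ∫⁻ x in C, w x ∂gaussMeasure N ≠ ∞ := fun C =>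
    ((setLIntegral_le_lintegral _ _).trans_lt (lintegral_exp_mul_sq_norm_lt_top N ha)).ne
  rw [lintegral_prod_mul (f := w) (g := w) (by fun_prop) (by fun_prop)]
  exact ENNReal.mul_ne_top (h A) (h B)

theorem stmt_4_general (N : ℕ) (E : Set (EuclideanSpace ℝ (Fin N)))
    (s₀ : ℝ) (hs₀ : s₀ ∈ Set.Ioo (0 : ℝ) 1) (hfin : Lgamma N s₀ E Eᶜ < ⊤) :
    Filter.Tendsto (fun s : ℝ => ENNReal.ofReal s * Lgamma N s E Eᶜ)
      (nhdsWithin 0 (Set.Ioi 0))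
      (nhds (2 * gaussMeasure N E * gaussMeasure N Eᶜ)) := by
  set μ := ((gaussMeasure N).restrict E).prod ((gaussMeasure N).restrict Eᶜ)
  have hL : ∀ s, Lgamma N s E Eᶜ = ∫⁻ z, Kker N s z.1 z.2 ∂μ := fun s =>
    (lintegral_prod _ (measurable_Kker N s).aemeasurable).symm
  have hbound : ∫⁻ z, ENNReal.ofReal s₀ * Kker N s₀ z.1 z.2 +
      ENNReal.ofReal (2 * (1 - Real.exp (-2)) ^ (-(N : ℝ) / 2)) *
        (ENNReal.ofReal (Real.exp (4⁻¹ * ‖z.1‖ ^ 2)) *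
          ENNReal.ofReal (Real.exp (4⁻¹ * ‖z.2‖ ^ 2))) ∂μ ≠ ∞ := by
    rw [lintegral_add_left ((measurable_Kker N s₀).const_mul _),
      lintegral_const_mul' _ _ ENNReal.ofReal_ne_top, lintegral_const_mul' _ _ ENNReal.ofReal_ne_top,
      ← hL]
    exact ENNReal.add_ne_top.2 ⟨ENNReal.mul_ne_top ENNReal.ofReal_ne_top hfin.ne,
      ENNReal.mul_ne_top ENNReal.ofReal_ne_top
        (lintegral_prod_exp_mul_sq_norm_ne_top N (by norm_num) E Eᶜ)⟩
  have hlim := tendsto_lintegral_filter_of_dominated_convergence _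
    (Eventually.of_forall fun s => (measurable_Kker N s).const_mul _)
    (eventually_of_mem (Ioc_mem_nhdsGT hs₀.1) fun s hs => ae_of_all _ fun z =>
      mul_Kker_le hs.1 hs.2 z.1 z.2) hbound
    ((ae_lt_top (measurable_Kker N s₀) (hL s₀ ▸ hfin.ne)).mono fun z hz =>
      tendsto_mul_Kker hs₀.1 hz.ne)
  have hγ : ∫⁻ _, (2 : ℝ≥0∞) ∂μ = 2 * gaussMeasure N E * gaussMeasure N Eᶜ := by
    rw [lintegral_const, ← univ_prod_univ, Measure.prod_prod, Measure.restrict_apply_univ,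
      Measure.restrict_apply_univ, mul_assoc]
  simpa only [lintegral_const_mul' _ _ ENNReal.ofReal_ne_top, ← hL, hγ] using hlim

/-- For the whole-space fractional Gaussian perimeter
$P^γ_s(E) = ∫_E ∫_{E^c} K_s(x,y) dγ(y) dγ(x)$,
if $P^γ_{s_0}(E)<∞$ for some $s_0∈(0,1)$ then
$\lim_{s→0^+} s P^γ_s(E) = 2γ(E)γ(E^c)$. -/
theorem stmt_4 (N : ℕ) (E : Set (EuclideanSpace ℝ (Fin N))) (hE : MeasurableSet E)
    (s₀ : ℝ) (hs₀ : s₀ ∈ Set.Ioo (0 : ℝ) 1) (hfin : Lgamma N s₀ E Eᶜ < ⊤) :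
    Filter.Tendsto (fun s : ℝ => ENNReal.ofReal s * Lgamma N s E Eᶜ)
      (nhdsWithin 0 (Set.Ioi 0))
      (nhds (2 * gaussMeasure N E * gaussMeasure N Eᶜ)) :=
  stmt_4_general N E s₀ hs₀ hfin
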